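/- arXiv:1910.10300 — 2 statements merged into one kernel-verified Lean document; each statement's English description precedes it below -/
import Mathlib

section
/- Let m ≥ 1, w ∈ (0,∞), and let C̄ ∈ ℝ^{m×m} be lower triangular with nonnegative diagonal entries. Let C̃ be the unique lower triangular matrix with positive diagonal entries satisfying C̃ᵀ·C̃ = C̄ᵀ·C̄ + w²·I_m, and set C = C̄·C̃⁻¹ with entries c_ab. For a ∈ {1,…,m}, let d̄_a = (c̄_{a+1,a},…,c̄_{m,a}) ∈ ℝ^{m−a} and let C̄_a ∈ ℝ^{(m−a)×(m−a)} be the trailing submatrix of C̄ with rows and columns a+1,…,m (with the conventions d̄_m = 0 and C̄_m empty). Then for every a, α_a² ≤ c_aa² ≤ β_a², where α_a² = c̄_aa²/(c̄_aa² + w² + ν̄_a²), β_a² = c̄_aa²/(c̄_aa² + w² + ν̲_a²), ν̲_a² = w²·‖d̄_a‖²/(σ_max(C̄_a)² + w²), and ν̄_a² = w²·‖d̄_a‖²/(σ_min(C̄_a)² + w²). -/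
open Matrix

/-- The singular values of a real matrix `A`: the square roots of the eigenvalues of
`Aᵀ·A` (indexed by the column type). -/
noncomputable def singVals {ι κ : Type*} [Fintype ι] [Fintype κ] [DecidableEq κ]
    (A : Matrix ι κ ℝ) : κ → ℝ :=
  fun j => Real.sqrt ((Matrix.isHermitian_conjTranspose_mul_self A).eigenvalues j)

/-- The largest singular value (spectral norm). -/
noncomputable def sigmaMax {ι κ : Type*} [Fintype ι] [Fintype κ] [DecidableEq κ]
    (A : Matrix ι κ ℝ) : ℝ := ⨆ j, singVals A j

/-- The smallest singular value. -/
noncomputable def sigmaMin {ι κ : Type*} [Fintype ι] [Fintype κ] [DecidableEq κ]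
    (A : Matrix ι κ ℝ) : ℝ := ⨅ j, singVals A j

/-- The trailing principal submatrix `C̄_a` of `C` with rows and columns `a+1,…,m`. -/
def trailing {m : ℕ} (C : Matrix (Fin m) (Fin m) ℝ) (a : Fin m) :
    Matrix {i : Fin m // a < i} {i : Fin m // a < i} ℝ :=
  fun i j => C i.1 j.1

/-- `‖d̄_a‖²`: the squared Euclidean norm of the part of column `a` of `C`
strictly below the diagonal, i.e. of `(c_{a+1,a},…,c_{m,a})`. -/
def tailSq {m : ℕ} (C : Matrix (Fin m) (Fin m) ℝ) (a : Fin m) : ℝ :=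
  ∑ i : Fin m, if a < i then (C i a) ^ 2 else 0

set_option linter.unusedSectionVars false
variable {n : Type*} [Fintype n] [DecidableEq n]

lemma psd_dot (M : Matrix n n ℝ) (h : M.PosSemidef) (x : n → ℝ) : 0 ≤ x ⬝ᵥ M *ᵥ x := by
  have := h.dotProduct_mulVec_nonneg x
  simpa using this

lemma qf_le {P : Matrix n n ℝ} (hP : P.IsHermitian) {u : ℝ}
    (hu : ∀ i, hP.eigenvalues i ≤ u) (x : n → ℝ) :
    x ⬝ᵥ P *ᵥ x ≤ u * (x ⬝ᵥ x) := by
  set U : Matrix n n ℝ := (hP.eigenvectorUnitary : Matrix n n ℝ) with hU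
  have hUU : U * star U = 1 := (Matrix.mem_unitaryGroup_iff).mp hP.eigenvectorUnitary.2
  have hps : (u • (1 : Matrix n n ℝ) - P).PosSemidef := by
    have h1 : u • (1 : Matrix n n ℝ) - P
        = U * Matrix.diagonal (fun i => u - hP.eigenvalues i) * Uᴴ := by
      have hsp : P = U * Matrix.diagonal (RCLike.ofReal ∘ hP.eigenvalues) * Uᴴ := by
        rw [hU, ← Matrix.star_eq_conjTranspose]; exact hP.spectral_theorem
      have hd : Matrix.diagonal (fun i => u - hP.eigenvalues i)
          = u • (1 : Matrix n n ℝ) - Matrix.diagonal (RCLike.ofReal ∘ hP.eigenvalues) := by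
        rw [Matrix.smul_one_eq_diagonal]
        ext i j
        by_cases hij : i = j <;> simp [Matrix.diagonal, hij]
      rw [hd, Matrix.mul_sub, Matrix.sub_mul]
      rw [← hsp]
      congr 1
      rw [Matrix.mul_smul, Matrix.smul_mul, Matrix.mul_one, ← Matrix.star_eq_conjTranspose, hUU]
    rw [h1]
    exact (Matrix.posSemidef_diagonal_iff.mpr fun i => sub_nonneg.2 (hu i)).mul_mul_conjTranspose_same U
  have h0 := psd_dot _ hps x
  rw [Matrix.sub_mulVec, Matrix.smul_mulVec, Matrix.one_mulVec, dotProduct_sub,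
    dotProduct_smul, smul_eq_mul] at h0
  linarith

lemma le_qf {P : Matrix n n ℝ} (hP : P.IsHermitian) {l : ℝ}
    (hl : ∀ i, l ≤ hP.eigenvalues i) (x : n → ℝ) :
    l * (x ⬝ᵥ x) ≤ x ⬝ᵥ P *ᵥ x := by
  set U : Matrix n n ℝ := (hP.eigenvectorUnitary : Matrix n n ℝ) with hU
  have hUU : U * star U = 1 := (Matrix.mem_unitaryGroup_iff).mp hP.eigenvectorUnitary.2
  have hps : (P - l • (1 : Matrix n n ℝ)).PosSemidef := by
    have h1 : P - l • (1 : Matrix n n ℝ)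
        = U * Matrix.diagonal (fun i => hP.eigenvalues i - l) * Uᴴ := by
      have hsp : P = U * Matrix.diagonal (RCLike.ofReal ∘ hP.eigenvalues) * Uᴴ := by
        rw [hU, ← Matrix.star_eq_conjTranspose]; exact hP.spectral_theorem
      have hd : Matrix.diagonal (fun i => hP.eigenvalues i - l)
          = Matrix.diagonal (RCLike.ofReal ∘ hP.eigenvalues) - l • (1 : Matrix n n ℝ) := by
        rw [Matrix.smul_one_eq_diagonal]
        ext i j
        by_cases hij : i = j <;> simp [Matrix.diagonal, hij]
      rw [hd, Matrix.mul_sub, Matrix.sub_mul]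
      rw [← hsp]
      congr 1
      rw [Matrix.mul_smul, Matrix.smul_mul, Matrix.mul_one, ← Matrix.star_eq_conjTranspose, hUU]
    rw [h1]
    exact (Matrix.posSemidef_diagonal_iff.mpr fun i => sub_nonneg.2 (hl i)).mul_mul_conjTranspose_same U
  have h0 := psd_dot _ hps x
  rw [Matrix.sub_mulVec, Matrix.smul_mulVec, Matrix.one_mulVec, dotProduct_sub,
    dotProduct_smul, smul_eq_mul] at h0
  linarith

lemma eigBasis_dot_self {P : Matrix n n ℝ} (hP : P.IsHermitian) (i : n) :
    (⇑(hP.eigenvectorBasis i) : n → ℝ) ⬝ᵥ ⇑(hP.eigenvectorBasis i) = 1 := by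
  have h := (orthonormal_iff_ite.mp hP.eigenvectorBasis.orthonormal) i i
  simp only [if_true, eq_self_iff_true] at h
  rw [PiLp.inner_apply] at h
  simpa [dotProduct, ← sq] using h

lemma dot_self_nonneg (x : n → ℝ) : 0 ≤ x ⬝ᵥ x :=
  Finset.sum_nonneg fun i _ => mul_self_nonneg _

lemma dot_self_pos {x : n → ℝ} (hx : x ≠ 0) : 0 < x ⬝ᵥ x := by
  have := Matrix.dotProduct_star_self_pos_iff (v := x)
  simpa using this.mpr hx

lemma dot_sq_le (x y : n → ℝ) : (x ⬝ᵥ y) ^ 2 ≤ (x ⬝ᵥ x) * (y ⬝ᵥ y) := by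
  have h := Finset.sum_mul_sq_le_sq_mul_sq Finset.univ x y
  simpa only [dotProduct, ← pow_two] using h

lemma inv_qf_bounds {P : Matrix n n ℝ} (hPd : P.PosDef) {l u : ℝ} (hl : 0 < l)
    (hlow : ∀ x : n → ℝ, l * (x ⬝ᵥ x) ≤ x ⬝ᵥ P *ᵥ x)
    (hhigh : ∀ x : n → ℝ, x ⬝ᵥ P *ᵥ x ≤ u * (x ⬝ᵥ x)) (d : n → ℝ) :
    (d ⬝ᵥ d) / u ≤ d ⬝ᵥ P⁻¹ *ᵥ d ∧ d ⬝ᵥ P⁻¹ *ᵥ d ≤ (d ⬝ᵥ d) / l := by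
  have hP' : (P⁻¹).IsHermitian := hPd.inv.isHermitian
  have hdet : IsUnit P.det := hPd.det_pos.ne'.isUnit
  have heig : ∀ i, 1 / u ≤ hP'.eigenvalues i ∧ hP'.eigenvalues i ≤ 1 / l := by
    intro i
    set v : n → ℝ := ⇑(hP'.eigenvectorBasis i) with hv
    have hmv : P⁻¹ *ᵥ v = hP'.eigenvalues i • v := hP'.mulVec_eigenvectorBasis i
    have hvv : v ⬝ᵥ v = 1 := eigBasis_dot_self hP' i
    have hq1 : l ≤ v ⬝ᵥ P *ᵥ v := by simpa [hvv] using hlow v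
    have hq2 : v ⬝ᵥ P *ᵥ v ≤ u := by simpa [hvv] using hhigh v
    have hPP : P *ᵥ (P⁻¹ *ᵥ v) = v := by
      rw [Matrix.mulVec_mulVec, Matrix.mul_nonsing_inv _ hdet, Matrix.one_mulVec]
    have hv1 : v = hP'.eigenvalues i • (P *ᵥ v) := by
      conv_lhs => rw [← hPP, hmv]
      rw [Matrix.mulVec_smul]
    have h1 : (1 : ℝ) = hP'.eigenvalues i * (v ⬝ᵥ P *ᵥ v) := by
      calc (1 : ℝ) = v ⬝ᵥ v := hvv.symm
        _ = v ⬝ᵥ (hP'.eigenvalues i • (P *ᵥ v)) := by rw [← hv1]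
        _ = hP'.eigenvalues i * (v ⬝ᵥ P *ᵥ v) := by rw [dotProduct_smul, smul_eq_mul]
    have hq0 : 0 < v ⬝ᵥ P *ᵥ v := lt_of_lt_of_le hl hq1
    have hu0 : 0 < u := lt_of_lt_of_le hq0 hq2
    have hμ : hP'.eigenvalues i = (v ⬝ᵥ P *ᵥ v)⁻¹ := by
      field_simp at h1 ⊢
      linarith [h1]
    constructor
    · rw [hμ, one_div]
      exact inv_anti₀ hq0 hq2
    · rw [hμ, one_div]
      exact inv_anti₀ hl hq1
  constructor
  · have := le_qf hP' (fun i => (heig i).1) d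
    calc (d ⬝ᵥ d) / u = 1 / u * (d ⬝ᵥ d) := by ring
      _ ≤ _ := this
  · have := qf_le hP' (fun i => (heig i).2) d
    calc d ⬝ᵥ P⁻¹ *ᵥ d ≤ 1 / l * (d ⬝ᵥ d) := this
      _ = (d ⬝ᵥ d) / l := by ring

lemma sigmaMin_nonneg (A : Matrix n n ℝ) : 0 ≤ sigmaMin A :=
  Real.iInf_nonneg fun i => Real.sqrt_nonneg _

lemma eig_AtA_bounds (A : Matrix n n ℝ) (i : n) :
    sigmaMin A ^ 2 ≤ (Matrix.isHermitian_conjTranspose_mul_self A).eigenvalues i ∧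
      (Matrix.isHermitian_conjTranspose_mul_self A).eigenvalues i ≤ sigmaMax A ^ 2 := by
  have hnn : 0 ≤ (Matrix.isHermitian_conjTranspose_mul_self A).eigenvalues i :=
    (Matrix.posSemidef_conjTranspose_mul_self A).eigenvalues_nonneg i
  have hsq : singVals A i ^ 2 = (Matrix.isHermitian_conjTranspose_mul_self A).eigenvalues i :=
    Real.sq_sqrt hnn
  constructor
  · have h1 : sigmaMin A ≤ singVals A i := ciInf_le (Finite.bddBelow_range _) i
    rw [← hsq]
    exact pow_le_pow_left₀ (sigmaMin_nonneg A) h1 2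
  · have h1 : singVals A i ≤ sigmaMax A := le_ciSup (Finite.bddAbove_range _) i
    rw [← hsq]
    exact pow_le_pow_left₀ (Real.sqrt_nonneg _) h1 2

lemma mulVec_sq_bounds (A : Matrix n n ℝ) (y : n → ℝ) :
    sigmaMin A ^ 2 * (y ⬝ᵥ y) ≤ (A *ᵥ y) ⬝ᵥ (A *ᵥ y) ∧
      (A *ᵥ y) ⬝ᵥ (A *ᵥ y) ≤ sigmaMax A ^ 2 * (y ⬝ᵥ y) := by
  have key : y ⬝ᵥ (Aᴴ * A) *ᵥ y = (A *ᵥ y) ⬝ᵥ (A *ᵥ y) := by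
    rw [← Matrix.mulVec_mulVec, Matrix.dotProduct_mulVec,
      Matrix.conjTranspose_eq_transpose_of_trivial, Matrix.vecMul_transpose]
  constructor
  · have := le_qf (Matrix.isHermitian_conjTranspose_mul_self A)
      (fun i => (eig_AtA_bounds A i).1) y
    rwa [key] at this
  · have := qf_le (Matrix.isHermitian_conjTranspose_mul_self A)
      (fun i => (eig_AtA_bounds A i).2) y
    rwa [key] at this

lemma transpose_mulVec_sq_bounds (A : Matrix n n ℝ) (x : n → ℝ) :
    sigmaMin A ^ 2 * (x ⬝ᵥ x) ≤ (Aᵀ *ᵥ x) ⬝ᵥ (Aᵀ *ᵥ x) ∧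
      (Aᵀ *ᵥ x) ⬝ᵥ (Aᵀ *ᵥ x) ≤ sigmaMax A ^ 2 * (x ⬝ᵥ x) := by
  set z : n → ℝ := Aᵀ *ᵥ x with hz
  have hzz : z ⬝ᵥ z = x ⬝ᵥ (A *ᵥ z) := by
    conv_lhs => rw [hz]
    rw [Matrix.dotProduct_mulVec, Matrix.vecMul_transpose, dotProduct_comm]
  have hr0 : 0 ≤ z ⬝ᵥ z := dot_self_nonneg z
  have hx0 : 0 ≤ x ⬝ᵥ x := dot_self_nonneg x
  constructor
  · -- lower bound
    rcases eq_or_lt_of_le (sigmaMin_nonneg A) with hs | hs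
    · rw [← hs]; simpa using hr0
    · -- A is invertible
      have hinj : Function.Injective A.mulVec := by
        intro y₁ y₂ hy
        by_contra hne
        have hy0 : y₁ - y₂ ≠ 0 := sub_ne_zero.mpr hne
        have h1 : A *ᵥ (y₁ - y₂) = 0 := by
          rw [Matrix.mulVec_sub, hy, sub_self]
        have h2 := (mulVec_sq_bounds A (y₁ - y₂)).1
        rw [h1] at h2
        simp only [dotProduct_zero, zero_dotProduct] at h2
        have h3 : 0 < sigmaMin A ^ 2 * ((y₁ - y₂) ⬝ᵥ (y₁ - y₂)) :=
          mul_pos (pow_pos hs 2) (dot_self_pos hy0)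
        linarith [h2, h3, dot_self_nonneg (0 : n → ℝ)]
      have hunit : IsUnit A := Matrix.mulVec_injective_iff_isUnit.mp hinj
      have hdet : IsUnit A.det := (Matrix.isUnit_iff_isUnit_det A).mp hunit
      set y : n → ℝ := A⁻¹ *ᵥ x with hy
      have hAy : A *ᵥ y = x := by
        rw [hy, Matrix.mulVec_mulVec, Matrix.mul_nonsing_inv _ hdet, Matrix.one_mulVec]
      have hxx : x ⬝ᵥ x = y ⬝ᵥ z := by
        rw [hz, Matrix.dotProduct_mulVec, Matrix.vecMul_transpose, hAy]
      have hcs : (y ⬝ᵥ z) ^ 2 ≤ (y ⬝ᵥ y) * (z ⬝ᵥ z) := dot_sq_le y z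
      have hlow : sigmaMin A ^ 2 * (y ⬝ᵥ y) ≤ x ⬝ᵥ x := by
        have := (mulVec_sq_bounds A y).1
        rwa [hAy] at this
      have hy0 : 0 ≤ y ⬝ᵥ y := dot_self_nonneg y
      rcases eq_or_lt_of_le hx0 with hx | hx
      · rw [← hx]; simpa using hr0
      · rw [← hxx] at hcs
        have e1 := mul_le_mul_of_nonneg_left hcs (pow_pos hs 2).le
        have e2 := mul_le_mul_of_nonneg_right hlow hr0
        nlinarith [e1, e2, hxx, hx]
  · -- upper bound
    have hcs : (x ⬝ᵥ (A *ᵥ z)) ^ 2 ≤ (x ⬝ᵥ x) * ((A *ᵥ z) ⬝ᵥ (A *ᵥ z)) := dot_sq_le x _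
    have hhigh := (mulVec_sq_bounds A z).2
    rcases eq_or_lt_of_le hr0 with hr | hr
    · rw [← hr]
      exact mul_nonneg (sq_nonneg _) hx0
    · nlinarith [hcs, hhigh, hzz, hr, hx0, sq_nonneg (sigmaMax A)]

lemma sum_tail {m : ℕ} (a : Fin m) (f : Fin m → ℝ) (hf : ∀ k, ¬ a < k → f k = 0) :
    ∑ k, f k = ∑ k : {i : Fin m // a < i}, f k.1 := by
  rw [← Finset.sum_filter_of_ne (p := fun k => a < k) (fun x _ hx => by
    by_contra h; exact hx (hf x h))]
  exact Finset.sum_subtype _ (by simp) f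

private theorem diag_sq_bounds_of_preconditioning'
    (m : ℕ) (hm : 1 ≤ m) (w : ℝ) (hw : 0 < w)
    (Cb Ct : Matrix (Fin m) (Fin m) ℝ)
    (hCbLT : ∀ i j : Fin m, i < j → Cb i j = 0)
    (hCbdiag : ∀ i, 0 ≤ Cb i i)
    (hCtLT : ∀ i j : Fin m, i < j → Ct i j = 0)
    (hCtdiag : ∀ i, 0 < Ct i i)
    (hCt : Ctᵀ * Ct = Cbᵀ * Cb + (w ^ 2) • (1 : Matrix (Fin m) (Fin m) ℝ)) :
    ∀ a : Fin m,
      Cb a a ^ 2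
          / (Cb a a ^ 2 + w ^ 2
            + w ^ 2 * tailSq Cb a / (sigmaMin (trailing Cb a) ^ 2 + w ^ 2))
        ≤ ((Cb * Ct⁻¹) a a) ^ 2 ∧
      ((Cb * Ct⁻¹) a a) ^ 2
        ≤ Cb a a ^ 2
          / (Cb a a ^ 2 + w ^ 2
            + w ^ 2 * tailSq Cb a / (sigmaMax (trailing Cb a) ^ 2 + w ^ 2)) := by
  intro a
  classical
  set A : Matrix {i : Fin m // a < i} {i : Fin m // a < i} ℝ := trailing Cb a with hA
  set L : Matrix {i : Fin m // a < i} {i : Fin m // a < i} ℝ := trailing Ct a with hL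
  set dd : {i : Fin m // a < i} → ℝ := fun i => Cb i.1 a with hdd
  set uu : {i : Fin m // a < i} → ℝ := fun i => Ct i.1 a with huu
  set N : Matrix {i : Fin m // a < i} {i : Fin m // a < i} ℝ := Aᵀ * A + (w ^ 2) • 1 with hN
  set P : Matrix {i : Fin m // a < i} {i : Fin m // a < i} ℝ := A * Aᵀ + (w ^ 2) • 1 with hP
  -- entrywise form of hCt
  have hent : ∀ i j : Fin m, ∑ k, Ct k i * Ct k j
      = (∑ k, Cb k i * Cb k j) + w ^ 2 * (if i = j then 1 else 0) := by
    intro i j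
    have h := congrFun (congrFun hCt i) j
    simpa [Matrix.mul_apply, Matrix.add_apply, Matrix.smul_apply, Matrix.one_apply,
      Matrix.transpose_apply] using h
  -- positive definiteness
  have hw1 : ∀ {κ : Type} [Fintype κ] [DecidableEq κ],
      ((w ^ 2) • (1 : Matrix κ κ ℝ)).PosDef := by
    intro κ _ _
    rw [Matrix.smul_one_eq_diagonal]
    exact Matrix.posDef_diagonal_iff.mpr fun i => by positivity
  have hNd : N.PosDef := by
    rw [hN]
    refine Matrix.PosDef.posSemidef_add ?_ hw1
    have := Matrix.posSemidef_conjTranspose_mul_self A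
    rwa [Matrix.conjTranspose_eq_transpose_of_trivial] at this
  have hPd : P.PosDef := by
    rw [hP]
    refine Matrix.PosDef.posSemidef_add ?_ hw1
    have := Matrix.posSemidef_self_mul_conjTranspose A
    rwa [Matrix.conjTranspose_eq_transpose_of_trivial] at this
  have hdetN : IsUnit N.det := hNd.det_pos.ne'.isUnit
  have hdetP : IsUnit P.det := hPd.det_pos.ne'.isUnit
  -- trailing products
  have hLL : Lᵀ * L = N := by
    ext i j
    have h1 : ∑ k, Ct k i.1 * Ct k j.1 = ∑ k : {i : Fin m // a < i}, Ct k.1 i.1 * Ct k.1 j.1 :=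
      sum_tail a _ (fun k hk => by
        rw [hCtLT k i.1 (lt_of_le_of_lt (not_lt.mp hk) i.2), zero_mul])
    have h2 : ∑ k, Cb k i.1 * Cb k j.1 = ∑ k : {i : Fin m // a < i}, Cb k.1 i.1 * Cb k.1 j.1 :=
      sum_tail a _ (fun k hk => by
        rw [hCbLT k i.1 (lt_of_le_of_lt (not_lt.mp hk) i.2), zero_mul])
    have hee : (i = j) ↔ (i.1 = j.1) := Subtype.ext_iff
    have h := hent i.1 j.1
    rw [h1, h2] at h
    rw [hN, hL, hA]
    simp only [Matrix.add_apply, Matrix.smul_apply, Matrix.one_apply, Matrix.mul_apply,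
      Matrix.transpose_apply, trailing, smul_eq_mul]
    rw [h]
    by_cases hij : i = j
    · rw [if_pos hij, if_pos (hee.mp hij)]
    · rw [if_neg hij, if_neg (fun hc => hij (hee.mpr hc))]
  have hLu : Lᵀ *ᵥ uu = Aᵀ *ᵥ dd := by
    funext i
    have h1 : ∑ k, Ct k i.1 * Ct k a = ∑ k : {i : Fin m // a < i}, Ct k.1 i.1 * Ct k.1 a :=
      sum_tail a _ (fun k hk => by
        rw [hCtLT k i.1 (lt_of_le_of_lt (not_lt.mp hk) i.2), zero_mul])
    have h2 : ∑ k, Cb k i.1 * Cb k a = ∑ k : {i : Fin m // a < i}, Cb k.1 i.1 * Cb k.1 a :=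
      sum_tail a _ (fun k hk => by
        rw [hCbLT k i.1 (lt_of_le_of_lt (not_lt.mp hk) i.2), zero_mul])
    have h := hent i.1 a
    rw [h1, h2, if_neg (fun hc : i.1 = a => absurd i.2 (by rw [hc]; exact lt_irrefl a)), mul_zero,
      add_zero] at h
    show ∑ k : {i : Fin m // a < i}, Lᵀ i k * uu k = ∑ k : {i : Fin m // a < i}, Aᵀ i k * dd k
    simp only [Matrix.transpose_apply, hL, hA, huu, hdd, trailing]
    exact h
  have hdetL : IsUnit L.det := by
    have hsq : L.det ^ 2 = N.det := by
      rw [← hLL, Matrix.det_mul, Matrix.det_transpose, sq]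
    rw [isUnit_iff_ne_zero]
    intro h0
    rw [h0] at hsq
    have := hNd.det_pos
    rw [← hsq] at this
    simp at this
  have hdetLT : IsUnit Lᵀ.det := by rwa [Matrix.det_transpose]
  -- ‖u‖² as a quadratic form in N⁻¹
  have hmid : L * N⁻¹ * Lᵀ = 1 := by
    rw [← hLL, Matrix.mul_inv_rev]
    rw [← Matrix.mul_assoc L L⁻¹ Lᵀ⁻¹, Matrix.mul_nonsing_inv _ hdetL, Matrix.one_mul,
      Matrix.nonsing_inv_mul _ hdetLT]
  have huu2 : uu ⬝ᵥ uu = (Aᵀ *ᵥ dd) ⬝ᵥ (N⁻¹ *ᵥ (Aᵀ *ᵥ dd)) := by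
    have h3 : L *ᵥ (N⁻¹ *ᵥ (Lᵀ *ᵥ uu)) = uu := by
      rw [Matrix.mulVec_mulVec, Matrix.mulVec_mulVec, hmid, Matrix.one_mulVec]
    rw [← hLu]
    calc uu ⬝ᵥ uu = uu ⬝ᵥ (L *ᵥ (N⁻¹ *ᵥ (Lᵀ *ᵥ uu))) := by rw [h3]
      _ = (uu ᵥ* L) ⬝ᵥ (N⁻¹ *ᵥ (Lᵀ *ᵥ uu)) := by rw [Matrix.dotProduct_mulVec]
      _ = (Lᵀ *ᵥ uu) ⬝ᵥ (N⁻¹ *ᵥ (Lᵀ *ᵥ uu)) := by rw [Matrix.mulVec_transpose]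
  -- the Woodbury-type identity
  have hPA : P * A = A * N := by
    rw [hP, hN, Matrix.add_mul, Matrix.mul_add, Matrix.smul_mul, Matrix.mul_smul,
      Matrix.one_mul, Matrix.mul_one, Matrix.mul_assoc]
  have hAN : A * N⁻¹ = P⁻¹ * A := by
    have h1 : P⁻¹ * (P * A) = A := by
      rw [← Matrix.mul_assoc, Matrix.nonsing_inv_mul _ hdetP, Matrix.one_mul]
    calc A * N⁻¹ = (P⁻¹ * (P * A)) * N⁻¹ := by rw [h1]
      _ = (P⁻¹ * (A * N)) * N⁻¹ := by rw [hPA]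
      _ = P⁻¹ * A * (N * N⁻¹) := by rw [← Matrix.mul_assoc, Matrix.mul_assoc (P⁻¹ * A)]
      _ = P⁻¹ * A := by rw [Matrix.mul_nonsing_inv _ hdetN, Matrix.mul_one]
  have hANA : A * N⁻¹ * Aᵀ = 1 - (w ^ 2) • P⁻¹ := by
    rw [hAN, Matrix.mul_assoc]
    have hAAt : A * Aᵀ = P - (w ^ 2) • 1 := by rw [hP]; abel
    rw [hAAt, Matrix.mul_sub, Matrix.nonsing_inv_mul _ hdetP, Matrix.mul_smul, Matrix.mul_one]
  have hkey : (Aᵀ *ᵥ dd) ⬝ᵥ (N⁻¹ *ᵥ (Aᵀ *ᵥ dd))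
      = dd ⬝ᵥ dd - w ^ 2 * (dd ⬝ᵥ (P⁻¹ *ᵥ dd)) := by
    calc (Aᵀ *ᵥ dd) ⬝ᵥ (N⁻¹ *ᵥ (Aᵀ *ᵥ dd))
        = (dd ᵥ* A) ⬝ᵥ ((N⁻¹ * Aᵀ) *ᵥ dd) := by
          rw [Matrix.mulVec_mulVec, Matrix.mulVec_transpose]
      _ = dd ⬝ᵥ (A *ᵥ ((N⁻¹ * Aᵀ) *ᵥ dd)) := (Matrix.dotProduct_mulVec _ _ _).symm
      _ = dd ⬝ᵥ ((A * N⁻¹ * Aᵀ) *ᵥ dd) := by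
          rw [Matrix.mulVec_mulVec, ← Matrix.mul_assoc]
      _ = dd ⬝ᵥ dd - w ^ 2 * (dd ⬝ᵥ (P⁻¹ *ᵥ dd)) := by
          rw [hANA, Matrix.sub_mulVec, Matrix.one_mulVec, Matrix.smul_mulVec,
            dotProduct_sub, dotProduct_smul, smul_eq_mul]
  -- diagonal identity
  have hsplit : ∀ (M : Matrix (Fin m) (Fin m) ℝ), (∀ i j : Fin m, i < j → M i j = 0) →
      ∑ k, M k a * M k a = M a a ^ 2 + ∑ k : {i : Fin m // a < i}, M k.1 a * M k.1 a := by
    intro M hM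
    have hterm : ∀ k, M k a * M k a
        = (if k = a then M a a ^ 2 else 0) + (if a < k then M k a * M k a else 0) := by
      intro k
      rcases lt_trichotomy k a with h | h | h
      · rw [hM k a h, if_neg (ne_of_lt h), if_neg (not_lt.mpr h.le)]; ring
      · subst h; rw [if_pos rfl, if_neg (lt_irrefl k)]; ring
      · rw [if_neg (ne_of_gt h), if_pos h]; ring
    rw [Finset.sum_congr rfl (fun k _ => hterm k), Finset.sum_add_distrib]
    congr 1
    · rw [Finset.sum_ite_eq' Finset.univ a, if_pos (Finset.mem_univ a)]
    · rw [sum_tail a _ (fun k hk => if_neg hk)]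
      exact Finset.sum_congr rfl (fun k _ => if_pos k.2)
  have hct2 : Ct a a ^ 2 = Cb a a ^ 2 + w ^ 2 + w ^ 2 * (dd ⬝ᵥ (P⁻¹ *ᵥ dd)) := by
    have h := hent a a
    rw [hsplit Ct hCtLT, hsplit Cb hCbLT, if_pos rfl, mul_one] at h
    have huud : ∑ k : {i : Fin m // a < i}, Ct k.1 a * Ct k.1 a = uu ⬝ᵥ uu := rfl
    have hddd : ∑ k : {i : Fin m // a < i}, Cb k.1 a * Cb k.1 a = dd ⬝ᵥ dd := rfl
    rw [huud, hddd, huu2, hkey] at h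
    linarith
  -- tailSq
  have ht : tailSq Cb a = dd ⬝ᵥ dd := by
    rw [tailSq, sum_tail a _ (fun k hk => if_neg hk)]
    exact Finset.sum_congr rfl (fun k _ => by rw [if_pos k.2, hdd]; ring)
  -- quadratic form bounds for P and P⁻¹
  have hPx : ∀ x, x ⬝ᵥ P *ᵥ x = (Aᵀ *ᵥ x) ⬝ᵥ (Aᵀ *ᵥ x) + w ^ 2 * (x ⬝ᵥ x) := by
    intro x
    rw [hP, Matrix.add_mulVec, dotProduct_add, Matrix.smul_mulVec, Matrix.one_mulVec,
      dotProduct_smul, smul_eq_mul, ← Matrix.mulVec_mulVec, Matrix.dotProduct_mulVec,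
      ← Matrix.mulVec_transpose]
  have hlow : ∀ x, (sigmaMin A ^ 2 + w ^ 2) * (x ⬝ᵥ x) ≤ x ⬝ᵥ P *ᵥ x := by
    intro x
    rw [hPx x, add_mul]
    have := (transpose_mulVec_sq_bounds A x).1
    linarith
  have hhigh : ∀ x, x ⬝ᵥ P *ᵥ x ≤ (sigmaMax A ^ 2 + w ^ 2) * (x ⬝ᵥ x) := by
    intro x
    rw [hPx x, add_mul]
    have := (transpose_mulVec_sq_bounds A x).2
    linarith
  have hl0 : (0:ℝ) < sigmaMin A ^ 2 + w ^ 2 := by positivity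
  have hu0 : (0:ℝ) < sigmaMax A ^ 2 + w ^ 2 := by positivity
  have hrb := inv_qf_bounds hPd hl0 hlow hhigh dd
  have ht0 : 0 ≤ dd ⬝ᵥ dd := dot_self_nonneg dd
  have hr0 : 0 ≤ dd ⬝ᵥ (P⁻¹ *ᵥ dd) := by
    have := hrb.1
    have h2 : 0 ≤ (dd ⬝ᵥ dd) / (sigmaMax A ^ 2 + w ^ 2) := div_nonneg ht0 hu0.le
    linarith
  -- diagonal entry of Cb * Ct⁻¹
  have hMd : (Cbᵀ * Cb + (w ^ 2) • (1 : Matrix (Fin m) (Fin m) ℝ)).PosDef := by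
    refine Matrix.PosDef.posSemidef_add ?_ hw1
    have := Matrix.posSemidef_conjTranspose_mul_self Cb
    rwa [Matrix.conjTranspose_eq_transpose_of_trivial] at this
  have hdetCt : IsUnit Ct.det := by
    have hsq : Ct.det ^ 2 = (Cbᵀ * Cb + (w ^ 2) • (1 : Matrix (Fin m) (Fin m) ℝ)).det := by
      rw [← hCt, Matrix.det_mul, Matrix.det_transpose, sq]
    rw [isUnit_iff_ne_zero]
    intro h0
    rw [h0] at hsq
    have := hMd.det_pos
    rw [← hsq] at this
    simp at this
  haveI := Ct.invertibleOfIsUnitDet hdetCt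
  have htri : Ct.BlockTriangular (OrderDual.toDual : Fin m → (Fin m)ᵒᵈ) := by
    intro i j h
    exact hCtLT i j h
  have htri' : Ct⁻¹.BlockTriangular (OrderDual.toDual : Fin m → (Fin m)ᵒᵈ) :=
    Matrix.blockTriangular_inv_of_blockTriangular htri
  have hinvLT : ∀ i j : Fin m, i < j → Ct⁻¹ i j = 0 := fun i j h => htri' h
  have hCtaa : Ct a a ≠ 0 := (hCtdiag a).ne'
  have hinv_diag : Ct⁻¹ a a = (Ct a a)⁻¹ := by
    have h1 : (Ct * Ct⁻¹) a a = 1 := by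
      rw [Matrix.mul_nonsing_inv _ hdetCt, Matrix.one_apply_eq]
    rw [Matrix.mul_apply] at h1
    have h2 : ∑ k, Ct a k * Ct⁻¹ k a = Ct a a * Ct⁻¹ a a := by
      refine Finset.sum_eq_single a (fun k _ hk => ?_) (fun h => absurd (Finset.mem_univ a) h)
      rcases lt_or_gt_of_ne hk with h | h
      · rw [hinvLT k a h, mul_zero]
      · rw [hCtLT a k h, zero_mul]
    rw [h2] at h1
    exact mul_left_cancel₀ hCtaa (by rw [h1, mul_inv_cancel₀ hCtaa])
  have hc : (Cb * Ct⁻¹) a a = Cb a a * (Ct a a)⁻¹ := by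
    rw [Matrix.mul_apply]
    rw [Finset.sum_eq_single a (fun k _ hk => ?_) (fun h => absurd (Finset.mem_univ a) h),
      hinv_diag]
    rcases lt_or_gt_of_ne hk with h | h
    · rw [hinvLT k a h, mul_zero]
    · rw [hCbLT a k h, zero_mul]
  -- final computation
  have hcsq : ((Cb * Ct⁻¹) a a) ^ 2
      = Cb a a ^ 2 / (Cb a a ^ 2 + w ^ 2 + w ^ 2 * (dd ⬝ᵥ (P⁻¹ *ᵥ dd))) := by
    rw [hc, ← hct2, mul_pow, inv_pow, div_eq_mul_inv]
  rw [hcsq, ht]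
  set r : ℝ := dd ⬝ᵥ (P⁻¹ *ᵥ dd) with hr
  set t : ℝ := dd ⬝ᵥ dd with htd
  have hX : 0 ≤ Cb a a ^ 2 := sq_nonneg _
  have hw2 : (0:ℝ) < w ^ 2 := by positivity
  have hr0' : 0 ≤ r := hr0
  have ht0' : 0 ≤ t := ht0
  constructor
  · have hD2 : 0 < Cb a a ^ 2 + w ^ 2 + w ^ 2 * r := by
      have : 0 ≤ w ^ 2 * r := mul_nonneg hw2.le hr0'
      linarith
    have hle : w ^ 2 * r ≤ w ^ 2 * t / (sigmaMin A ^ 2 + w ^ 2) := by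
      rw [mul_div_assoc]
      exact mul_le_mul_of_nonneg_left hrb.2 hw2.le
    exact div_le_div_of_nonneg_left hX hD2 (by linarith)
  · have hge : w ^ 2 * t / (sigmaMax A ^ 2 + w ^ 2) ≤ w ^ 2 * r := by
      rw [mul_div_assoc]
      exact mul_le_mul_of_nonneg_left hrb.1 hw2.le
    have hD2 : 0 < Cb a a ^ 2 + w ^ 2 + w ^ 2 * t / (sigmaMax A ^ 2 + w ^ 2) := by
      have h9 : 0 ≤ w ^ 2 * t / (sigmaMax A ^ 2 + w ^ 2) :=
        div_nonneg (mul_nonneg hw2.le ht0') hu0.le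
      linarith
    exact div_le_div_of_nonneg_left hX hD2 (by linarith)

/-- Diagonal-entry bounds for `C = C̄·C̃⁻¹`, where `C̃` is the reverse
Cholesky factor of `C̄ᵀ·C̄ + w²·I_m`:
`α_a² ≤ c_aa² ≤ β_a²` with `α_a² = c̄_aa²/(c̄_aa² + w² + ν̄_a²)`,
`β_a² = c̄_aa²/(c̄_aa² + w² + ν̲_a²)`, `ν̲_a² = w²‖d̄_a‖²/(σ_max(C̄_a)² + w²)`,
`ν̄_a² = w²‖d̄_a‖²/(σ_min(C̄_a)² + w²)`. -/
theorem diag_sq_bounds_of_preconditioning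
    (m : ℕ) (hm : 1 ≤ m) (w : ℝ) (hw : 0 < w)
    (Cb Ct : Matrix (Fin m) (Fin m) ℝ)
    (hCbLT : ∀ i j : Fin m, i < j → Cb i j = 0)
    (hCbdiag : ∀ i, 0 ≤ Cb i i)
    (hCtLT : ∀ i j : Fin m, i < j → Ct i j = 0)
    (hCtdiag : ∀ i, 0 < Ct i i)
    (hCt : Ctᵀ * Ct = Cbᵀ * Cb + (w ^ 2) • (1 : Matrix (Fin m) (Fin m) ℝ)) :
    ∀ a : Fin m,
      Cb a a ^ 2
          / (Cb a a ^ 2 + w ^ 2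
            + w ^ 2 * tailSq Cb a / (sigmaMin (trailing Cb a) ^ 2 + w ^ 2))
        ≤ ((Cb * Ct⁻¹) a a) ^ 2 ∧
      ((Cb * Ct⁻¹) a a) ^ 2
        ≤ Cb a a ^ 2
          / (Cb a a ^ 2 + w ^ 2
            + w ^ 2 * tailSq Cb a / (sigmaMax (trailing Cb a) ^ 2 + w ^ 2)) := by
  exact diag_sq_bounds_of_preconditioning' m hm w hw Cb Ct hCbLT hCbdiag hCtLT hCtdiag hCt
end

section
/- Let m ≤ n, J̄ ∈ ℝ^{m×n}, w ∈ (0,∞), and let R ∈ ℝ^{n×n} be invertible with Rᵀ·R = J̄ᵀ·J̄ + w²·I_n. Suppose J̄·R⁻¹ = C·Ĵ with C ∈ ℝ^{m×m}, Ĵ ∈ ℝ^{m×n}, and Ĵ·Ĵᵀ = I_m. Then for all indices 1 ≤ a ≤ a' ≤ m and 1 ≤ b ≤ b' ≤ m: (i) every entry of C satisfies |c_ab| ≤ σ_max(J̄)/√(σ_max(J̄)² + w²) < 1; (ii) the submatrix C_{a:a',b:b'} (rows a,…,a' and columns b,…,b' of C) satisfies ‖C_{a:a',b:b'}‖ < 1;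 (iii) ‖C_{a:a',b:b'}‖₁ < a' − a + 1; (iv) ‖C_{a:a',b:b'}‖_∞ < b' − b + 1; and (v) ‖C_{a:a',b:b'}‖_F < min{√(a'−a+1), √(b'−b+1)}. -/
open Matrix

section Aux
variable {ι κ : Type*} [Fintype ι] [Fintype κ]

lemma dpA_nonneg (v : ι → ℝ) : 0 ≤ v ⬝ᵥ v :=
  Finset.sum_nonneg fun i _ => mul_self_nonneg _

lemma dpA_cs (v w : ι → ℝ) :
    v ⬝ᵥ w ≤ Real.sqrt (v ⬝ᵥ v) * Real.sqrt (w ⬝ᵥ w) := by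
  have h := Finset.sum_mul_sq_le_sq_mul_sq Finset.univ v w
  calc v ⬝ᵥ w ≤ |v ⬝ᵥ w| := le_abs_self _
    _ = Real.sqrt ((v ⬝ᵥ w) ^ 2) := (Real.sqrt_sq_eq_abs _).symm
    _ ≤ Real.sqrt ((v ⬝ᵥ v) * (w ⬝ᵥ w)) := by
        apply Real.sqrt_le_sqrt
        simpa [dotProduct, sq] using h
    _ = _ := Real.sqrt_mul (dpA_nonneg v) _

lemma dpA_mul_self (A : Matrix ι κ ℝ) (x : κ → ℝ) :
    (A *ᵥ x) ⬝ᵥ (A *ᵥ x) = x ⬝ᵥ ((Aᵀ * A) *ᵥ x) := by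
  rw [← mulVec_mulVec, dotProduct_mulVec x, vecMul_transpose]

lemma bnd_transpose (A : Matrix ι κ ℝ) {c : ℝ} (hc : 0 ≤ c)
    (h : ∀ x, (A *ᵥ x) ⬝ᵥ (A *ᵥ x) ≤ c * (x ⬝ᵥ x)) :
    ∀ y, (Aᵀ *ᵥ y) ⬝ᵥ (Aᵀ *ᵥ y) ≤ c * (y ⬝ᵥ y) := by
  intro y
  set t := (Aᵀ *ᵥ y) ⬝ᵥ (Aᵀ *ᵥ y) with ht
  have ht0 : 0 ≤ t := dpA_nonneg _
  have h1 : t = (A *ᵥ (Aᵀ *ᵥ y)) ⬝ᵥ y := by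
    rw [ht, dotProduct_mulVec, vecMul_transpose]
  have h2 : t ≤ Real.sqrt (c * t) * Real.sqrt (y ⬝ᵥ y) := by
    calc t = (A *ᵥ (Aᵀ *ᵥ y)) ⬝ᵥ y := h1
      _ ≤ Real.sqrt ((A *ᵥ (Aᵀ *ᵥ y)) ⬝ᵥ (A *ᵥ (Aᵀ *ᵥ y))) * Real.sqrt (y ⬝ᵥ y) :=
          dpA_cs _ _
      _ ≤ Real.sqrt (c * t) * Real.sqrt (y ⬝ᵥ y) := by
          gcongr
          exact ht ▸ h _
  rcases eq_or_lt_of_le ht0 with h0 | h0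
  · rw [← h0]; exact mul_nonneg hc (dpA_nonneg y)
  · have hst : Real.sqrt t ≤ Real.sqrt c * Real.sqrt (y ⬝ᵥ y) := by
      have h3 : Real.sqrt t * Real.sqrt t ≤ (Real.sqrt c * Real.sqrt (y ⬝ᵥ y)) * Real.sqrt t := by
        calc Real.sqrt t * Real.sqrt t = t := Real.mul_self_sqrt ht0
          _ ≤ Real.sqrt (c * t) * Real.sqrt (y ⬝ᵥ y) := h2
          _ = (Real.sqrt c * Real.sqrt (y ⬝ᵥ y)) * Real.sqrt t := by
              rw [Real.sqrt_mul hc]; ring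
      exact le_of_mul_le_mul_right h3 (Real.sqrt_pos.2 h0)
    calc t = Real.sqrt t * Real.sqrt t := (Real.mul_self_sqrt ht0).symm
      _ ≤ (Real.sqrt c * Real.sqrt (y ⬝ᵥ y)) * (Real.sqrt c * Real.sqrt (y ⬝ᵥ y)) := by
          exact mul_le_mul hst hst (Real.sqrt_nonneg _) (by positivity)
      _ = c * (y ⬝ᵥ y) := by
          rw [mul_mul_mul_comm, Real.mul_self_sqrt hc, Real.mul_self_sqrt (dpA_nonneg y)]

end Aux

section Spec
variable {ι : Type*} [Fintype ι] [DecidableEq ι]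

lemma qf_expand (S : Matrix ι ι ℝ) (hS : S.IsHermitian) (x : ι → ℝ) :
    x ⬝ᵥ (S *ᵥ x) =
      ∑ j, hS.eigenvalues j * ((star (hS.eigenvectorUnitary : Matrix ι ι ℝ)) *ᵥ x) j ^ 2 := by
  set U := (hS.eigenvectorUnitary : Matrix ι ι ℝ) with hU
  have hst : star U = Uᵀ := by
    simp [star, Matrix.conjTranspose]
  conv_lhs => rw [hS.spectral_theorem, Unitary.conjStarAlgAut_apply]
  rw [← mulVec_mulVec, ← mulVec_mulVec, dotProduct_mulVec x, ← mulVec_transpose, ← hst, ← hU]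
  simp only [RCLike.ofReal_real_eq_id, Function.comp_def, id_eq]
  simp [dotProduct, mulVec_diagonal, sq]
  ring_nf
  congr 1
  ext j
  ring

lemma dp_unitary (S : Matrix ι ι ℝ) (hS : S.IsHermitian) (x : ι → ℝ) :
    ((star (hS.eigenvectorUnitary : Matrix ι ι ℝ)) *ᵥ x) ⬝ᵥ
      ((star (hS.eigenvectorUnitary : Matrix ι ι ℝ)) *ᵥ x) = x ⬝ᵥ x := by
  set U := (hS.eigenvectorUnitary : Matrix ι ι ℝ) with hU
  have hst : star U = Uᵀ := by simp [star, Matrix.conjTranspose]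
  have h1 : U * star U = 1 := mem_unitaryGroup_iff.mp hS.eigenvectorUnitary.2
  rw [dpA_mul_self, hst, transpose_transpose, ← hst, h1, one_mulVec]

end Spec

section Spec2
variable {ι κ : Type*} [Fintype ι] [Fintype κ] [DecidableEq κ]

lemma bnd_of_eig_le (A : Matrix ι κ ℝ) {c : ℝ}
    (h : ∀ j, (Matrix.isHermitian_conjTranspose_mul_self A).eigenvalues j ≤ c) :
    ∀ x, (A *ᵥ x) ⬝ᵥ (A *ᵥ x) ≤ c * (x ⬝ᵥ x) := by
  intro x
  set hS := Matrix.isHermitian_conjTranspose_mul_self A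
  have hct : Aᴴ = Aᵀ := conjTranspose_eq_transpose_of_trivial A
  rw [dpA_mul_self, ← hct, qf_expand _ hS, ← dp_unitary _ hS x]
  calc ∑ j, hS.eigenvalues j * ((star (hS.eigenvectorUnitary : Matrix κ κ ℝ)) *ᵥ x) j ^ 2
      ≤ ∑ j, c * ((star (hS.eigenvectorUnitary : Matrix κ κ ℝ)) *ᵥ x) j ^ 2 := by
        apply Finset.sum_le_sum
        intro j _
        exact mul_le_mul_of_nonneg_right (h j) (sq_nonneg _)
    _ = c * _ := by rw [← Finset.mul_sum]; congr 1; simp [dotProduct, sq]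

lemma eig_le_of_bnd (A : Matrix ι κ ℝ) {c : ℝ}
    (h : ∀ x, (A *ᵥ x) ⬝ᵥ (A *ᵥ x) ≤ c * (x ⬝ᵥ x)) :
    ∀ j, (Matrix.isHermitian_conjTranspose_mul_self A).eigenvalues j ≤ c := by
  intro j
  set hS := Matrix.isHermitian_conjTranspose_mul_self A
  set U := (hS.eigenvectorUnitary : Matrix κ κ ℝ) with hU
  have h2 : star U * U = 1 := mem_unitaryGroup_iff'.mp hS.eigenvectorUnitary.2
  set x := U *ᵥ Pi.single j 1 with hx
  have hz : star U *ᵥ x = Pi.single j 1 := by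
    rw [hx, mulVec_mulVec, h2, one_mulVec]
  have e1 := qf_expand _ hS x
  have e2 := dp_unitary _ hS x
  have hct : Aᴴ = Aᵀ := conjTranspose_eq_transpose_of_trivial A
  have e0 : (A *ᵥ x) ⬝ᵥ (A *ᵥ x) = x ⬝ᵥ ((Aᴴ * A) *ᵥ x) := by
    rw [hct]; exact dpA_mul_self A x
  rw [← e0] at e1
  rw [hz] at e1 e2
  have e3 : ∑ k, hS.eigenvalues k * (Pi.single j 1 : κ → ℝ) k ^ 2 = hS.eigenvalues j := by
    rw [Finset.sum_eq_single j]
    · simp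
    · intro k _ hk; simp [Pi.single_apply, hk]
    · simp
  have e4 : (Pi.single j 1 : κ → ℝ) ⬝ᵥ (Pi.single j 1 : κ → ℝ) = 1 := by
    simp [dotProduct, Pi.single_apply]
  have := h x
  rw [e1, e3] at this
  rw [← e2, e4, mul_one] at this
  exact this

end Spec2

section Sums
variable {N : ℕ} {p : Fin N → Prop} [DecidablePred p]

lemma sum_subtype_eq (f : Fin N → ℝ) :
    ∑ i : Subtype p, f i.1 = ∑ i ∈ Finset.univ.filter p, f i := by
  exact (Finset.sum_subtype _ (fun x => by simp) f).symm

lemma sum_subtype_le (f : Fin N → ℝ) (hf : ∀ i, 0 ≤ f i) :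
    ∑ i : Subtype p, f i.1 ≤ ∑ i, f i := by
  rw [sum_subtype_eq]
  exact Finset.sum_le_sum_of_subset_of_nonneg (Finset.subset_univ _) fun i _ _ => hf i

lemma sum_eq_sum_subtype (f : Fin N → ℝ) (h0 : ∀ t, ¬ p t → f t = 0) :
    ∑ t, f t = ∑ t : Subtype p, f t.1 := by
  rw [sum_subtype_eq]
  exact (Finset.sum_subset (Finset.filter_subset _ _)
    fun x _ hx => h0 x (by simpa using hx)).symm

end Sums



/-- The submatrix `C_{a:a',b:b'}` of `C` with rows `a,…,a'` and columns `b,…,b'`. -/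
def block {m : ℕ} (C : Matrix (Fin m) (Fin m) ℝ) (a a' b b' : Fin m) :
    Matrix {i : Fin m // a ≤ i ∧ i ≤ a'} {j : Fin m // b ≤ j ∧ j ≤ b'} ℝ :=
  fun i j => C i.1 j.1

/-- The matrix 1-norm (maximum absolute column sum). -/
noncomputable def matNorm1 {ι κ : Type*} [Fintype ι] [Fintype κ] (A : Matrix ι κ ℝ) : ℝ :=
  ⨆ j, ∑ i, |A i j|

/-- The matrix ∞-norm (maximum absolute row sum). -/
noncomputable def matNormInf {ι κ : Type*} [Fintype ι] [Fintype κ] (A : Matrix ι κ ℝ) : ℝ :=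
  ⨆ i, ∑ j, |A i j|

/-- The Frobenius norm. -/
noncomputable def frobNorm {ι κ : Type*} [Fintype ι] [Fintype κ] (A : Matrix ι κ ℝ) : ℝ :=
  Real.sqrt (∑ i, ∑ j, (A i j) ^ 2)

set_option maxHeartbeats 1000000 in
/-- Entry and submatrix norm bounds for the orthogonalization factor `C`
of the preconditioned matrix `J̄·R⁻¹ = C·Ĵ` with `Rᵀ·R = J̄ᵀ·J̄ + w²·I_n` and
`Ĵ·Ĵᵀ = I_m`. -/
theorem preconditioned_C_norm_bounds
    (m n : ℕ) (hm : 1 ≤ m) (hmn : m ≤ n)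
    (Jb : Matrix (Fin m) (Fin n) ℝ) (w : ℝ) (hw : 0 < w)
    (R : Matrix (Fin n) (Fin n) ℝ) (hR : IsUnit R.det)
    (hchol : Rᵀ * R = Jbᵀ * Jb + (w ^ 2) • (1 : Matrix (Fin n) (Fin n) ℝ))
    (C : Matrix (Fin m) (Fin m) ℝ) (Jh : Matrix (Fin m) (Fin n) ℝ)
    (hfac : Jb * R⁻¹ = C * Jh) (hJh : Jh * Jhᵀ = 1) :
    (∀ a b : Fin m,
      |C a b| ≤ sigmaMax Jb / Real.sqrt (sigmaMax Jb ^ 2 + w ^ 2) ∧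
      sigmaMax Jb / Real.sqrt (sigmaMax Jb ^ 2 + w ^ 2) < 1) ∧
    (∀ a a' b b' : Fin m, a ≤ a' → b ≤ b' →
      sigmaMax (block C a a' b b') < 1 ∧
      matNorm1 (block C a a' b b') < ((a'.val - a.val + 1 : ℕ) : ℝ) ∧
      matNormInf (block C a a' b b') < ((b'.val - b.val + 1 : ℕ) : ℝ) ∧
      frobNorm (block C a a' b b')
        < min (Real.sqrt ((a'.val - a.val + 1 : ℕ) : ℝ))
            (Real.sqrt ((b'.val - b.val + 1 : ℕ) : ℝ))) := by
  have hnn : Nonempty (Fin n) := ⟨⟨0, by omega⟩⟩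
  set σ := sigmaMax Jb with hσdef
  have hlam : ∀ j, (Matrix.isHermitian_conjTranspose_mul_self Jb).eigenvalues j ≤ σ ^ 2 := by
    intro j
    have h1 : singVals Jb j ≤ σ :=
      le_ciSup (Set.Finite.bddAbove (Set.finite_range _)) j
    have h0 : 0 ≤ (Matrix.isHermitian_conjTranspose_mul_self Jb).eigenvalues j :=
      Matrix.eigenvalues_conjTranspose_mul_self_nonneg Jb j
    calc (Matrix.isHermitian_conjTranspose_mul_self Jb).eigenvalues j
        = (singVals Jb j) ^ 2 := by rw [singVals, Real.sq_sqrt h0]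
      _ ≤ σ ^ 2 := pow_le_pow_left₀ (Real.sqrt_nonneg _) h1 2
  have hσ0 : 0 ≤ σ := by
    have h1 := le_ciSup (f := singVals Jb) (Set.Finite.bddAbove (Set.finite_range _))
      (Classical.arbitrary (Fin n))
    exact le_trans (Real.sqrt_nonneg _) h1
  have L1 : ∀ u, (Jb *ᵥ u) ⬝ᵥ (Jb *ᵥ u) ≤ σ ^ 2 * (u ⬝ᵥ u) := bnd_of_eig_le Jb hlam
  have L2 : ∀ y, (Jbᵀ *ᵥ y) ⬝ᵥ (Jbᵀ *ᵥ y) ≤ σ ^ 2 * (y ⬝ᵥ y) :=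
    bnd_transpose Jb (sq_nonneg σ) L1
  -- matrix algebra
  set T : Matrix (Fin m) (Fin m) ℝ := Jb * Jbᵀ with hT
  set Tw : Matrix (Fin m) (Fin m) ℝ := T + (w ^ 2) • 1 with hTw
  have hqT : ∀ y, y ⬝ᵥ (T *ᵥ y) = (Jbᵀ *ᵥ y) ⬝ᵥ (Jbᵀ *ᵥ y) := by
    intro y
    rw [dpA_mul_self Jbᵀ y, transpose_transpose, ← hT]
  have hTw_mulVec : ∀ y, Tw *ᵥ y = T *ᵥ y + (w ^ 2) • y := by
    intro y
    rw [hTw, add_mulVec, smul_mulVec, one_mulVec]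
  have hTw_unit : IsUnit Tw.det := by
    rw [isUnit_iff_ne_zero]
    intro hdet
    obtain ⟨v, hv0, hv⟩ := (Matrix.exists_mulVec_eq_zero_iff).2 hdet
    have h1 : v ⬝ᵥ (Tw *ᵥ v) = 0 := by rw [hv, dotProduct_zero]
    rw [hTw_mulVec, dotProduct_add, dotProduct_smul, hqT, smul_eq_mul] at h1
    have h2 : 0 < v ⬝ᵥ v :=
      lt_of_le_of_ne (dpA_nonneg v) (fun h => hv0 (dotProduct_self_eq_zero.mp h.symm))
    have h3 : 0 ≤ (Jbᵀ *ᵥ v) ⬝ᵥ (Jbᵀ *ᵥ v) := dpA_nonneg _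
    have h4 := mul_pos (pow_pos hw 2) h2
    linarith
  have hSw_unit : IsUnit (Jbᵀ * Jb + (w ^ 2) • (1 : Matrix (Fin n) (Fin n) ℝ)).det := by
    rw [← hchol, det_mul, det_transpose]
    exact hR.mul hR
  have hpush : Jb * (Jbᵀ * Jb + (w ^ 2) • (1 : Matrix (Fin n) (Fin n) ℝ)) = Tw * Jb := by
    rw [hTw, hT, Matrix.mul_add, Matrix.add_mul, Matrix.mul_smul, Matrix.smul_mul,
      Matrix.mul_one, Matrix.one_mul, Matrix.mul_assoc]
  have hinv : Jb * (Jbᵀ * Jb + (w ^ 2) • (1 : Matrix (Fin n) (Fin n) ℝ))⁻¹ = Tw⁻¹ * Jb := by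
    set Sw := Jbᵀ * Jb + (w ^ 2) • (1 : Matrix (Fin n) (Fin n) ℝ)
    calc Jb * Sw⁻¹ = (Tw⁻¹ * Tw) * (Jb * Sw⁻¹) := by
          rw [Matrix.nonsing_inv_mul _ hTw_unit, Matrix.one_mul]
      _ = Tw⁻¹ * ((Tw * Jb) * Sw⁻¹) := by simp only [Matrix.mul_assoc]
      _ = Tw⁻¹ * ((Jb * Sw) * Sw⁻¹) := by rw [hpush]
      _ = Tw⁻¹ * (Jb * (Sw * Sw⁻¹)) := by rw [Matrix.mul_assoc]
      _ = Tw⁻¹ * Jb := by rw [Matrix.mul_nonsing_inv _ hSw_unit, Matrix.mul_one]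
  have hMM : C * Cᵀ = Tw⁻¹ * T := by
    have h1 : C * Cᵀ = (C * Jh) * (C * Jh)ᵀ := by
      rw [transpose_mul, ← Matrix.mul_assoc, Matrix.mul_assoc C Jh Jhᵀ, hJh, Matrix.mul_one]
    rw [h1, ← hfac, transpose_mul, transpose_nonsing_inv]
    calc Jb * R⁻¹ * (Rᵀ⁻¹ * Jbᵀ) = Jb * (R⁻¹ * Rᵀ⁻¹) * Jbᵀ := by
          simp only [Matrix.mul_assoc]
      _ = Jb * (Rᵀ * R)⁻¹ * Jbᵀ := by rw [Matrix.mul_inv_rev]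
      _ = Tw⁻¹ * Jb * Jbᵀ := by rw [hchol, hinv]
      _ = Tw⁻¹ * T := by rw [hT, Matrix.mul_assoc]
  -- the key bound
  have hden : (0:ℝ) < σ ^ 2 + w ^ 2 := by positivity
  set c : ℝ := σ ^ 2 / (σ ^ 2 + w ^ 2) with hc
  have hc0 : 0 ≤ c := div_nonneg (sq_nonneg σ) hden.le
  have hc1 : c < 1 := by
    rw [hc, div_lt_one hden]
    nlinarith
  have hcomm : Tw⁻¹ * T * Tw = T := by
    have h1 : T * Tw = Tw * T := by
      rw [hTw, Matrix.mul_add, Matrix.add_mul, Matrix.mul_smul, Matrix.smul_mul,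
        Matrix.mul_one, Matrix.one_mul]
    rw [Matrix.mul_assoc, h1, ← Matrix.mul_assoc, Matrix.nonsing_inv_mul _ hTw_unit,
      Matrix.one_mul]
  have KEY : ∀ x, (Cᵀ *ᵥ x) ⬝ᵥ (Cᵀ *ᵥ x) ≤ c * (x ⬝ᵥ x) := by
    intro x
    have hx1 : (Cᵀ *ᵥ x) ⬝ᵥ (Cᵀ *ᵥ x) = x ⬝ᵥ ((C * Cᵀ) *ᵥ x) := by
      rw [dpA_mul_self Cᵀ x, transpose_transpose]
    set y := Tw⁻¹ *ᵥ x with hy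
    have hxy : x = Tw *ᵥ y := by
      rw [hy, mulVec_mulVec, Matrix.mul_nonsing_inv _ hTw_unit, one_mulVec]
    have hcomm2 : Tw⁻¹ * T = T * Tw⁻¹ := by
      calc Tw⁻¹ * T = (Tw⁻¹ * T * Tw) * Tw⁻¹ := by
            rw [Matrix.mul_assoc (Tw⁻¹ * T), Matrix.mul_nonsing_inv _ hTw_unit,
              Matrix.mul_one]
        _ = T * Tw⁻¹ := by rw [hcomm]
    have hx2 : (C * Cᵀ) *ᵥ x = T *ᵥ y := by
      rw [hMM, hcomm2, ← mulVec_mulVec, ← hy]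
    set u := Jbᵀ *ᵥ y with hu
    have hTy : T *ᵥ y = Jb *ᵥ u := by
      have : Jb *ᵥ u = T *ᵥ y := by rw [hu, mulVec_mulVec, ← hT]
      exact this.symm
    set p := (T *ᵥ y) ⬝ᵥ (T *ᵥ y) with hp
    set q := u ⬝ᵥ u with hq
    set r := y ⬝ᵥ y with hr
    have hqy : y ⬝ᵥ (T *ᵥ y) = q := by rw [hqT, hq, hu]
    have hqy' : (T *ᵥ y) ⬝ᵥ y = q := by rw [dotProduct_comm, hqy]
    have hLHS : x ⬝ᵥ ((C * Cᵀ) *ᵥ x) = p + w ^ 2 * q := by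
      rw [hx2, hxy, hTw_mulVec, add_dotProduct, smul_dotProduct, hqy, ← hp, smul_eq_mul]
    have hRHS : x ⬝ᵥ x = p + 2 * w ^ 2 * q + w ^ 2 * w ^ 2 * r := by
      rw [hxy, hTw_mulVec, add_dotProduct, dotProduct_add, dotProduct_add,
        smul_dotProduct, dotProduct_smul, dotProduct_smul, hqy, hqy']
      simp only [smul_dotProduct, dotProduct_smul, smul_eq_mul]
      rw [hr]
      ring
    have hpq : p ≤ σ ^ 2 * q := by rw [hp, hTy, hq]; exact L1 u
    have hqr : q ≤ σ ^ 2 * r := by rw [hq, hr, hu]; exact L2 y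
    have hq0 : 0 ≤ q := dpA_nonneg u
    have hr0 : 0 ≤ r := dpA_nonneg y
    rw [hx1, hLHS, hRHS, hc, div_mul_eq_mul_div, le_div_iff₀ hden]
    nlinarith [mul_le_mul_of_nonneg_left hpq (sq_nonneg w),
      mul_le_mul_of_nonneg_left hqr (mul_nonneg (sq_nonneg w) (sq_nonneg w))]
  have KEY2 : ∀ x, (C *ᵥ x) ⬝ᵥ (C *ᵥ x) ≤ c * (x ⬝ᵥ x) := by
    have h1 := bnd_transpose Cᵀ hc0 KEY
    simpa only [transpose_transpose] using h1
  -- entrywise and row/column square-sum facts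
  have hrow : ∀ i : Fin m, ∑ j, (C i j) ^ 2 ≤ c := by
    intro i
    have h1 := KEY (Pi.single i 1)
    have hv : Cᵀ *ᵥ Pi.single i 1 = fun j => C i j := by
      ext j
      simp [mulVec, dotProduct, Pi.single_apply]
    rw [hv] at h1
    have h2 : (Pi.single i 1 : Fin m → ℝ) ⬝ᵥ (Pi.single i 1 : Fin m → ℝ) = 1 := by
      simp [dotProduct, Pi.single_apply]
    rw [h2, mul_one] at h1
    calc ∑ j, (C i j) ^ 2 = (fun j => C i j) ⬝ᵥ (fun j => C i j) := by
          simp [dotProduct, sq]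
      _ ≤ c := h1
  have hcol : ∀ j : Fin m, ∑ i, (C i j) ^ 2 ≤ c := by
    intro j
    have h1 := KEY2 (Pi.single j 1)
    have hv : C *ᵥ Pi.single j 1 = fun i => C i j := by
      ext i
      simp [mulVec, dotProduct, Pi.single_apply]
    rw [hv] at h1
    have h2 : (Pi.single j 1 : Fin m → ℝ) ⬝ᵥ (Pi.single j 1 : Fin m → ℝ) = 1 := by
      simp [dotProduct, Pi.single_apply]
    rw [h2, mul_one] at h1
    calc ∑ i, (C i j) ^ 2 = (fun i => C i j) ⬝ᵥ (fun i => C i j) := by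
          simp [dotProduct, sq]
      _ ≤ c := h1
  have hsq : ∀ i j : Fin m, (C i j) ^ 2 ≤ c := by
    intro i j
    calc (C i j) ^ 2 ≤ ∑ j', (C i j') ^ 2 :=
          Finset.single_le_sum (fun k _ => sq_nonneg (C i k)) (Finset.mem_univ j)
      _ ≤ c := hrow i
  have hsqrtc : Real.sqrt c = σ / Real.sqrt (σ ^ 2 + w ^ 2) := by
    rw [hc, Real.sqrt_div (sq_nonneg σ), Real.sqrt_sq hσ0]
  have hentry : ∀ i j : Fin m, |C i j| ≤ σ / Real.sqrt (σ ^ 2 + w ^ 2) := by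
    intro i j
    rw [← hsqrtc, ← Real.sqrt_sq_eq_abs]
    exact Real.sqrt_le_sqrt (hsq i j)
  have hc'1 : σ / Real.sqrt (σ ^ 2 + w ^ 2) < 1 := by
    rw [div_lt_one (Real.sqrt_pos.2 hden)]
    calc σ = Real.sqrt (σ ^ 2) := (Real.sqrt_sq hσ0).symm
      _ < Real.sqrt (σ ^ 2 + w ^ 2) := by
          apply Real.sqrt_lt_sqrt (sq_nonneg σ)
          nlinarith
  refine ⟨fun a b => ⟨hentry a b, hc'1⟩, ?_⟩
  intro a a' b b' hab hbb'
  haveI hNα : Nonempty {i : Fin m // a ≤ i ∧ i ≤ a'} := ⟨⟨a, le_refl a, hab⟩⟩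
  haveI hNβ : Nonempty {j : Fin m // b ≤ j ∧ j ≤ b'} := ⟨⟨b, le_refl b, hbb'⟩⟩
  set K := block C a a' b b' with hK
  have hab' : a.val ≤ a'.val := hab
  have hbb'' : b.val ≤ b'.val := hbb'
  have hcardα : (Fintype.card {i : Fin m // a ≤ i ∧ i ≤ a'} : ℝ)
      = ((a'.val - a.val + 1 : ℕ) : ℝ) := by
    norm_cast
    rw [Fintype.card_subtype]
    have h1 : Finset.univ.filter (fun i : Fin m => a ≤ i ∧ i ≤ a') = Finset.Icc a a' := by
      ext i; simp [Finset.mem_Icc]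
    rw [h1, Fin.card_Icc]
    omega
  have hcardβ : (Fintype.card {j : Fin m // b ≤ j ∧ j ≤ b'} : ℝ)
      = ((b'.val - b.val + 1 : ℕ) : ℝ) := by
    norm_cast
    rw [Fintype.card_subtype]
    have h1 : Finset.univ.filter (fun j : Fin m => b ≤ j ∧ j ≤ b') = Finset.Icc b b' := by
      ext j; simp [Finset.mem_Icc]
    rw [h1, Fin.card_Icc]
    omega
  have hα1 : (0:ℝ) < (Fintype.card {i : Fin m // a ≤ i ∧ i ≤ a'} : ℝ) := by
    exact_mod_cast Fintype.card_pos
  have hβ1 : (0:ℝ) < (Fintype.card {j : Fin m // b ≤ j ∧ j ≤ b'} : ℝ) := by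
    exact_mod_cast Fintype.card_pos
  -- sigmaMax bound
  have hbndK : ∀ x, (K *ᵥ x) ⬝ᵥ (K *ᵥ x) ≤ c * (x ⬝ᵥ x) := by
    intro x
    set x' : Fin m → ℝ := fun t => if h : b ≤ t ∧ t ≤ b' then x ⟨t, h⟩ else 0 with hx'
    have hsupp : ∀ t, ¬(b ≤ t ∧ t ≤ b') → x' t = 0 := fun t ht => dif_neg ht
    have hval : ∀ t : {j : Fin m // b ≤ j ∧ j ≤ b'}, x' t.1 = x t := fun t => dif_pos t.2
    have hxx : x' ⬝ᵥ x' = x ⬝ᵥ x := by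
      rw [dotProduct, dotProduct,
        sum_eq_sum_subtype (p := fun t => b ≤ t ∧ t ≤ b') (fun t => x' t * x' t) (fun t ht => by simp [hsupp t ht])]
      exact Finset.sum_congr rfl fun t _ => by rw [hval t]
    have hKx : ∀ i : {i : Fin m // a ≤ i ∧ i ≤ a'}, (K *ᵥ x) i = (C *ᵥ x') i.1 := by
      intro i
      rw [mulVec, mulVec, dotProduct, dotProduct,
        sum_eq_sum_subtype (p := fun t => b ≤ t ∧ t ≤ b') (fun t => C i.1 t * x' t) (fun t ht => by simp [hsupp t ht])]
      exact Finset.sum_congr rfl fun t _ => by rw [hval t]; rfl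
    calc (K *ᵥ x) ⬝ᵥ (K *ᵥ x)
        = ∑ i : {i : Fin m // a ≤ i ∧ i ≤ a'}, ((C *ᵥ x') i.1) * ((C *ᵥ x') i.1) := by
          rw [dotProduct]
          exact Finset.sum_congr rfl fun i _ => by rw [hKx i]
      _ ≤ ∑ i : Fin m, ((C *ᵥ x') i) * ((C *ᵥ x') i) :=
          sum_subtype_le _ (fun i => mul_self_nonneg _)
      _ = (C *ᵥ x') ⬝ᵥ (C *ᵥ x') := rfl
      _ ≤ c * (x' ⬝ᵥ x') := KEY2 x'
      _ = c * (x ⬝ᵥ x) := by rw [hxx]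
  have hsig : sigmaMax K < 1 := by
    have heig := eig_le_of_bnd K hbndK
    have hsm : sigmaMax K ≤ Real.sqrt c :=
      ciSup_le fun j => Real.sqrt_le_sqrt (heig j)
    have hlt : Real.sqrt c < 1 := by
      calc Real.sqrt c < Real.sqrt 1 := Real.sqrt_lt_sqrt hc0 hc1
        _ = 1 := Real.sqrt_one
    exact lt_of_le_of_lt hsm hlt
  -- matNorm1
  have hn1 : matNorm1 K < ((a'.val - a.val + 1 : ℕ) : ℝ) := by
    obtain ⟨j0, hj0⟩ := Finite.exists_max (fun j : {j : Fin m // b ≤ j ∧ j ≤ b'} =>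
      ∑ i, |K i j|)
    have h1 : matNorm1 K ≤ ∑ i, |K i j0| := ciSup_le hj0
    have h2 : ∑ i, |K i j0|
        ≤ (Fintype.card {i : Fin m // a ≤ i ∧ i ≤ a'} : ℝ) * (σ / Real.sqrt (σ ^ 2 + w ^ 2)) := by
      calc ∑ i, |K i j0| ≤ ∑ _i : {i : Fin m // a ≤ i ∧ i ≤ a'}, (σ / Real.sqrt (σ ^ 2 + w ^ 2)) :=
            Finset.sum_le_sum fun i _ => hentry i.1 j0.1
        _ = _ := by rw [Finset.sum_const, nsmul_eq_mul, Finset.card_univ]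
    calc matNorm1 K ≤ _ := le_trans h1 h2
      _ < (Fintype.card {i : Fin m // a ≤ i ∧ i ≤ a'} : ℝ) :=
          mul_lt_of_lt_one_right hα1 hc'1
      _ = _ := hcardα
  -- matNormInf
  have hninf : matNormInf K < ((b'.val - b.val + 1 : ℕ) : ℝ) := by
    obtain ⟨i0, hi0⟩ := Finite.exists_max (fun i : {i : Fin m // a ≤ i ∧ i ≤ a'} =>
      ∑ j, |K i j|)
    have h1 : matNormInf K ≤ ∑ j, |K i0 j| := ciSup_le hi0
    have h2 : ∑ j, |K i0 j|
        ≤ (Fintype.card {j : Fin m // b ≤ j ∧ j ≤ b'} : ℝ) * (σ / Real.sqrt (σ ^ 2 + w ^ 2)) := by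
      calc ∑ j, |K i0 j| ≤ ∑ _j : {j : Fin m // b ≤ j ∧ j ≤ b'}, (σ / Real.sqrt (σ ^ 2 + w ^ 2)) :=
            Finset.sum_le_sum fun j _ => hentry i0.1 j.1
        _ = _ := by rw [Finset.sum_const, nsmul_eq_mul, Finset.card_univ]
    calc matNormInf K ≤ _ := le_trans h1 h2
      _ < (Fintype.card {j : Fin m // b ≤ j ∧ j ≤ b'} : ℝ) :=
          mul_lt_of_lt_one_right hβ1 hc'1
      _ = _ := hcardβ
  -- frobenius
  have hfa : ∑ i, ∑ j, (K i j) ^ 2 < ((a'.val - a.val + 1 : ℕ) : ℝ) := by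
    have h1 : ∑ i, ∑ j, (K i j) ^ 2
        ≤ (Fintype.card {i : Fin m // a ≤ i ∧ i ≤ a'} : ℝ) * c := by
      calc ∑ i, ∑ j, (K i j) ^ 2 ≤ ∑ _i : {i : Fin m // a ≤ i ∧ i ≤ a'}, c := by
            apply Finset.sum_le_sum
            intro i _
            calc ∑ j, (K i j) ^ 2 ≤ ∑ j : Fin m, (C i.1 j) ^ 2 :=
                  sum_subtype_le (fun j => (C i.1 j) ^ 2) (fun j => sq_nonneg _)
              _ ≤ c := hrow i.1
        _ = _ := by rw [Finset.sum_const, nsmul_eq_mul, Finset.card_univ]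
    calc ∑ i, ∑ j, (K i j) ^ 2 ≤ _ := h1
      _ < (Fintype.card {i : Fin m // a ≤ i ∧ i ≤ a'} : ℝ) := mul_lt_of_lt_one_right hα1 hc1
      _ = _ := hcardα
  have hfb : ∑ i, ∑ j, (K i j) ^ 2 < ((b'.val - b.val + 1 : ℕ) : ℝ) := by
    rw [Finset.sum_comm]
    have h1 : ∑ j, ∑ i, (K i j) ^ 2
        ≤ (Fintype.card {j : Fin m // b ≤ j ∧ j ≤ b'} : ℝ) * c := by
      calc ∑ j, ∑ i, (K i j) ^ 2 ≤ ∑ _j : {j : Fin m // b ≤ j ∧ j ≤ b'}, c := by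
            apply Finset.sum_le_sum
            intro j _
            calc ∑ i, (K i j) ^ 2 ≤ ∑ i : Fin m, (C i j.1) ^ 2 :=
                  sum_subtype_le (fun i => (C i j.1) ^ 2) (fun i => sq_nonneg _)
              _ ≤ c := hcol j.1
        _ = _ := by rw [Finset.sum_const, nsmul_eq_mul, Finset.card_univ]
    calc ∑ j, ∑ i, (K i j) ^ 2 ≤ _ := h1
      _ < (Fintype.card {j : Fin m // b ≤ j ∧ j ≤ b'} : ℝ) := mul_lt_of_lt_one_right hβ1 hc1
      _ = _ := hcardβ
  have hfro : frobNorm K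
      < min (Real.sqrt ((a'.val - a.val + 1 : ℕ) : ℝ))
          (Real.sqrt ((b'.val - b.val + 1 : ℕ) : ℝ)) := by
    have hs0 : 0 ≤ ∑ i, ∑ j, (K i j) ^ 2 :=
      Finset.sum_nonneg fun i _ => Finset.sum_nonneg fun j _ => sq_nonneg _
    rw [lt_min_iff]
    exact ⟨Real.sqrt_lt_sqrt hs0 hfa, Real.sqrt_lt_sqrt hs0 hfb⟩
  exact ⟨hsig, hn1, hninf, hfro⟩
end
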